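/- Let s₁, s₂ ∈ ℝ^{4,2} be lightlike with ⟨s₁,p⟩ ≠ 0, ⟨s₂,p⟩ ≠ 0 and ⟨s₁,s₂⟩ ≠ 0, and set a := ⟨s₂,p⟩s₁ − ⟨s₁,p⟩s₂. Then (a) ⟨a,a⟩ = −2⟨s₁,p⟩⟨s₂,p⟩⟨s₁,s₂⟩ ≠ 0 and ⟨a,p⟩ = 0, so σ_a is an M-Lie inversion; σ_a(p) = p, σ_a(s₁) = (⟨s₁,p⟩/⟨s₂,p⟩)·s₂ and σ_a(s₂) = (⟨s₂,p⟩/⟨s₁,p⟩)·s₁; and (b) uniqueness: every a' ∈ span{s₁,s₂} with ⟨a',a'⟩ ≠ 0 and ⟨a',p⟩ = 0 is a scalar multiple of a. (Claim: between two spheres that are not point spheres there is a unique M-Lie inversion mapping one to the other and preserving the point sphere complex.) -/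
import Mathlib


noncomputable section

/-- The vector space ℝ^{4,2}, modeled as `Fin 6 → ℝ`. -/
abbrev R42 : Type := Fin 6 → ℝ

/-- The symmetric bilinear form of signature (4,2) on ℝ^{4,2}. -/
def bform : R42 →ₗ[ℝ] R42 →ₗ[ℝ] ℝ :=
  LinearMap.mk₂ ℝ
    (fun x y => x 0 * y 0 + x 1 * y 1 + x 2 * y 2 + x 3 * y 3 - x 4 * y 4 - x 5 * y 5)
    (fun x x' y => by simp only [Pi.add_apply]; ring)
    (fun c x y => by simp only [Pi.smul_apply, smul_eq_mul]; ring)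
    (fun x y y' => by simp only [Pi.add_apply]; ring)
    (fun c x y => by simp only [Pi.smul_apply, smul_eq_mul]; ring)

/-- A lightlike vector: nonzero and isotropic. Represents an oriented 2-sphere. -/
def IsLightlike (v : R42) : Prop := v ≠ 0 ∧ bform v v = 0

/-- The Lie inversion with respect to the linear sphere complex determined by `a`. -/
def lieInv (a r : R42) : R42 := r - (2 * bform r a / bform a a) • a

lemma bform_comm (x y : R42) : bform x y = bform y x := by
  simp only [bform, LinearMap.mk₂_apply]; ring

/-- Between two spheres `s₁`, `s₂` that are not point spheres there is a
unique M-Lie inversion mapping one to the other and preserving the point sphere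
complex: `a = ⟨s₂,p⟩s₁ − ⟨s₁,p⟩s₂` works, and any `a' ∈ span {s₁,s₂}` with
`⟨a',a'⟩ ≠ 0` and `⟨a',p⟩ = 0` is a scalar multiple of `a`. -/
theorem stmt_5 (p s₁ s₂ : R42)
    (hp : bform p p = -1)
    (hs₁ : IsLightlike s₁) (hs₂ : IsLightlike s₂)
    (hs₁p : bform s₁ p ≠ 0) (hs₂p : bform s₂ p ≠ 0) (hs₁s₂ : bform s₁ s₂ ≠ 0)
    (a : R42) (ha : a = bform s₂ p • s₁ - bform s₁ p • s₂) :
    (bform a a = -2 * bform s₁ p * bform s₂ p * bform s₁ s₂ ∧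
      bform a a ≠ 0 ∧ bform a p = 0 ∧
      lieInv a p = p ∧
      lieInv a s₁ = (bform s₁ p / bform s₂ p) • s₂ ∧
      lieInv a s₂ = (bform s₂ p / bform s₁ p) • s₁) ∧
    (∀ a' ∈ Submodule.span ℝ ({s₁, s₂} : Set R42),
      bform a' a' ≠ 0 → bform a' p = 0 → ∃ c : ℝ, a' = c • a) := by
  set α := bform s₁ p with hα
  set β := bform s₂ p with hβ
  set γ := bform s₁ s₂ with hγ
  have h21 : bform s₂ s₁ = γ := bform_comm s₂ s₁
  have haa : bform a a = -2 * α * β * γ := by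
    simp only [ha, map_sub, map_smul, LinearMap.sub_apply, LinearMap.smul_apply,
      smul_eq_mul, hs₁.2, hs₂.2, h21, ← hγ]
    ring
  have haa0 : bform a a ≠ 0 := by
    rw [haa]; positivity
  have hap : bform a p = 0 := by
    simp only [ha, map_sub, map_smul, LinearMap.sub_apply, LinearMap.smul_apply,
      smul_eq_mul, ← hα, ← hβ]
    ring
  have hb1a : bform s₁ a = -(α * γ) := by
    simp only [ha, map_sub, map_smul, smul_eq_mul, hs₁.2, ← hγ]
    ring
  have hb2a : bform s₂ a = β * γ := by
    simp only [ha, map_sub, map_smul, smul_eq_mul, hs₂.2, h21]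
    ring
  refine ⟨⟨haa, haa0, hap, ?_, ?_, ?_⟩, ?_⟩
  · have hpa : bform p a = 0 := by rw [bform_comm, hap]
    simp [lieInv, hpa]
  · have hc : 2 * bform s₁ a / bform a a = 1 / β := by
      rw [hb1a, haa]; field_simp
    rw [lieInv, hc, ha]
    funext i
    simp only [Pi.sub_apply, Pi.smul_apply, smul_eq_mul]
    field_simp
    ring
  · have hc : 2 * bform s₂ a / bform a a = -(1 / α) := by
      rw [hb2a, haa]; field_simp
    rw [lieInv, hc, ha]
    funext i
    simp only [Pi.sub_apply, Pi.smul_apply, smul_eq_mul]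
    field_simp
    ring
  · intro a' ha' _ hap'
    obtain ⟨m, n, hmn⟩ := Submodule.mem_span_pair.mp ha'
    refine ⟨m / β, ?_⟩
    have hmnp : m * α + n * β = 0 := by
      rw [← hap', ← hmn]
      simp only [map_add, map_smul, LinearMap.add_apply, LinearMap.smul_apply,
        smul_eq_mul, ← hα, ← hβ]
    have hn : n = -(m * α) / β := by field_simp; linarith
    rw [← hmn, ha, hn]
    funext i
    simp only [Pi.add_apply, Pi.sub_apply, Pi.smul_apply, smul_eq_mul]
    field_simp
    ring
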